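/- arXiv:2507.21643 — 3 statements merged into one kernel-verified Lean document; each statement's English description precedes it below -/
import Mathlib

section
/- For every nonnegative integer n, w̃_{n,1} − 2·w̃_{n,2} = −(φ̃_{n+1} + φ̃_n), and consequently w̃_{n,0} − 2·w̃_{n,2} = −φ̃_{n+1}. -/
/-- Stirling numbers of the second kind. -/
def stirling2 : ℕ → ℕ → ℕ
  | 0, 0 => 1
  | 0, _ + 1 => 0
  | _ + 1, 0 => 0
  | n + 1, k + 1 => (k + 1) * stirling2 n (k + 1) + stirling2 n k

/-- Derangement numbers `d_n = n! ∑_{i=0}^n (-1)^i / i!`. -/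
def derang (n : ℕ) : ℚ :=
  (n.factorial : ℚ) * ∑ i ∈ Finset.range (n + 1), (-1 : ℚ) ^ i / (i.factorial : ℚ)

/-- Partial derangement numbers `d_{n,r}`. -/
def pderang (n r : ℕ) : ℚ :=
  if r ≤ n then (n.choose r : ℚ) * derang (n - r) else 0

/-- Partial deranged Bell numbers `w̃_{n,r}`. -/
def pdb (n r : ℕ) : ℚ :=
  ∑ k ∈ Finset.range (n + 1), (stirling2 n k : ℚ) * pderang k r

/-- Complementary Bell numbers `φ̃_n = ∑_{k=0}^n (-1)^k {n brace k}`. -/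
def cbell (n : ℕ) : ℚ :=
  ∑ k ∈ Finset.range (n + 1), (-1 : ℚ) ^ k * (stirling2 n k : ℚ)

lemma stirling2_of_lt : ∀ n k : ℕ, n < k → stirling2 n k = 0
  | 0, k + 1, _ => rfl
  | n + 1, k + 1, h => by
    have h1 : n < k + 1 := by omega
    have h2 : n < k := by omega
    simp [stirling2, stirling2_of_lt n (k+1) h1, stirling2_of_lt n k h2]

lemma derang_succ (k : ℕ) : derang (k + 1) = (k + 1) * derang k + (-1) ^ (k + 1) := by
  have hf : ((k+1).factorial : ℚ) ≠ 0 := by positivity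
  unfold derang
  rw [Finset.sum_range_succ]
  field_simp
  rw [Nat.factorial_succ]
  push_cast
  ring

lemma derang_zero : derang 0 = 1 := by simp [derang]

lemma key1 (k : ℕ) : pderang k 1 - 2 * pderang k 2 = -(k : ℚ) * (-1) ^ k := by
  match k with
  | 0 => simp [pderang]
  | 1 => simp [pderang, derang_zero, Nat.choose]
  | m + 2 =>
    have hdvd : 2 ∣ (m+2) * (m+1) := by
      rw [mul_comm]
      exact (Nat.even_mul_succ_self (m+1)).two_dvd
    have hch : ((m+2).choose 2 * 2 : ℕ) = (m+2) * (m+1) := by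
      rw [Nat.choose_two_right, show m+2-1 = m+1 from rfl, Nat.div_mul_cancel hdvd]
    have hch' : ((m+2).choose 2 : ℚ) = ((m:ℚ)+2) * ((m:ℚ)+1) / 2 := by
      have := congrArg (Nat.cast : ℕ → ℚ) hch
      push_cast at this
      linarith
    have h1 : pderang (m+2) 1 = (m+2 : ℚ) * derang (m+1) := by
      simp [pderang]
    have h2 : pderang (m+2) 2 = ((m+2).choose 2 : ℚ) * derang m := by
      simp [pderang]
    rw [h1, h2, hch', derang_succ m]
    push_cast
    ring

lemma key0 (k : ℕ) : pderang k 0 - pderang k 1 = (-1 : ℚ) ^ k := by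
  match k with
  | 0 => simp [pderang, derang_zero]
  | m + 1 =>
    have h0 : pderang (m+1) 0 = derang (m+1) := by simp [pderang]
    have h1 : pderang (m+1) 1 = (m+1 : ℚ) * derang m := by simp [pderang]
    rw [h0, h1, derang_succ m]
    ring

lemma cbell_sum (n : ℕ) :
    cbell (n + 1) + cbell n =
      ∑ k ∈ Finset.range (n + 1), (k : ℚ) * (-1) ^ k * (stirling2 n k : ℚ) := by
  have h1 : cbell (n+1) = ∑ k ∈ Finset.range (n+1),
      (-1 : ℚ)^(k+1) * ((k+1) * (stirling2 n (k+1) : ℚ) + (stirling2 n k : ℚ)) := by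
    unfold cbell
    rw [Finset.sum_range_succ']
    simp [stirling2]
  rw [h1]
  have h2 : ∑ k ∈ Finset.range (n+1), (k : ℚ) * (-1)^k * (stirling2 n k : ℚ)
      = ∑ k ∈ Finset.range (n+1), ((k:ℚ)+1) * (-1)^(k+1) * (stirling2 n (k+1) : ℚ) := by
    rw [Finset.sum_range_succ (fun k => ((k:ℚ)+1) * (-1)^(k+1) * (stirling2 n (k+1) : ℚ)) n,
        stirling2_of_lt n (n+1) (by omega),
        Finset.sum_range_succ' (fun k => (k:ℚ) * (-1)^k * (stirling2 n k : ℚ)) n]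
    simp
  rw [h2]
  unfold cbell
  rw [← Finset.sum_add_distrib]
  congr 1
  ext k
  ring

/-- `w̃_{n,1} - 2 w̃_{n,2} = -(φ̃_{n+1} + φ̃_n)` and
`w̃_{n,0} - 2 w̃_{n,2} = -φ̃_{n+1}`. -/
theorem pdb_one_sub_two_mul_pdb_two (n : ℕ) :
    pdb n 1 - 2 * pdb n 2 = -(cbell (n + 1) + cbell n) ∧
    pdb n 0 - 2 * pdb n 2 = -cbell (n + 1) := by
  have hA : pdb n 1 - 2 * pdb n 2 = -(cbell (n + 1) + cbell n) := by
    unfold pdb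
    rw [Finset.mul_sum, ← Finset.sum_sub_distrib, cbell_sum, ← Finset.sum_neg_distrib]
    congr 1
    ext k
    nlinarith [key1 k]
  have hB : pdb n 0 - pdb n 1 = cbell n := by
    unfold pdb cbell
    rw [← Finset.sum_sub_distrib]
    congr 1
    ext k
    rw [← mul_sub, key0 k]
    ring
  exact ⟨hA, by linarith⟩
end

section
/- For all integers n and r with n ≥ r + 1 > 0, (r+1)·w̃_{n,r+1} = ∑_{j=r}^{n−1} C(n,j)·w_{n−j}·(w̃_{j,r} − (r+1)·w̃_{j,r+1}). -/
/-- Ordered Bell numbers `w_n = ∑_{k=0}^n {n brace k} k!`. -/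
def ordBell (n : ℕ) : ℚ :=
  ∑ k ∈ Finset.range (n + 1), (stirling2 n k : ℚ) * (k.factorial : ℚ)

open Finset Nat PowerSeries

theorem stirling2_eq_stirlingSecond : stirling2 = stirlingSecond := by
  funext n k
  induction n generalizing k with
  | zero => cases k <;> rfl
  | succ n ih => cases k <;> simp [stirling2, stirlingSecond, ih]

theorem sum_range_choose_mul_stirlingSecond (n k : ℕ) :
    ∑ j ∈ range (n + 1), n.choose j * stirlingSecond j k = stirlingSecond (n + 1) (k + 1) := by
  induction n generalizing k with
  | zero => cases k <;> simp [stirlingSecond]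
  | succ n ih =>
    have hsplit := sum_choose_succ_mul (R := ℕ) (fun j _ => stirlingSecond j k) n
    simp only [Nat.cast_id] at hsplit
    rw [hsplit, ih]
    cases k with
    | zero => simp [stirlingSecond_one_right]
    | succ k =>
      simp only [stirlingSecond_succ_succ, mul_add, sum_add_distrib, mul_left_comm _ (k + 1),
        ← mul_sum, ih]
      ring

def stirlingTransform (c : ℕ → ℚ) (n : ℕ) : ℚ :=
  ∑ k ∈ range (n + 1), (stirlingSecond n k : ℚ) * c k

theorem stirlingTransform_eq_sum_range (c : ℕ → ℚ) {n m : ℕ} (h : n < m) :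
    stirlingTransform c n = ∑ k ∈ range m, (stirlingSecond n k : ℚ) * c k := by
  refine sum_subset (range_subset_range.mpr h) fun k _ hk => ?_
  rw [stirlingSecond_eq_zero_of_lt (by simpa using hk), Nat.cast_zero, zero_mul]

theorem sum_range_choose_mul_stirlingTransform (c : ℕ → ℚ) (n : ℕ) :
    ∑ j ∈ range (n + 1), n.choose j * stirlingTransform c j =
      ∑ k ∈ range (n + 1), (stirlingSecond (n + 1) (k + 1) : ℚ) * c k := by
  calc ∑ j ∈ range (n + 1), n.choose j * stirlingTransform c j
      = ∑ j ∈ range (n + 1), ∑ k ∈ range (n + 1),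
          (n.choose j * stirlingSecond j k : ℕ) * c k := by
        refine sum_congr rfl fun j hj => ?_
        rw [stirlingTransform_eq_sum_range c (m := n + 1) (mem_range.mp hj), mul_sum]
        push_cast
        simp only [mul_assoc]
    _ = ∑ k ∈ range (n + 1), (stirlingSecond (n + 1) (k + 1) : ℚ) * c k := by
        rw [sum_comm]
        simp only [← sum_mul, ← Nat.cast_sum, sum_range_choose_mul_stirlingSecond]

theorem sum_range_choose_mul_stirlingTransform_of_add_one_mul {c c' : ℕ → ℚ}
    (hc : ∀ k, (k + 1) * c k = c' (k + 1)) (n : ℕ) :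
    ∑ j ∈ range (n + 1), n.choose j * stirlingTransform c j =
      stirlingTransform c n + stirlingTransform c' n - if n = 0 then c' 0 else 0 := by
  -- the correction term is `{n brace 0} c'₀`
  have hshift : ∑ k ∈ range (n + 1), (stirlingSecond n (k + 1) : ℚ) * c' (k + 1) =
      stirlingTransform c' n - if n = 0 then c' 0 else 0 := by
    rw [stirlingTransform_eq_sum_range c' (by omega : n < n + 2), sum_range_succ' _ (n + 1)]
    cases n <;> simp
  rw [sum_range_choose_mul_stirlingTransform, stirlingTransform, add_sub_assoc, ← hshift,
    ← sum_add_distrib]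
  refine sum_congr rfl fun k _ => ?_
  rw [stirlingSecond_succ_succ, ← hc]
  push_cast
  ring

noncomputable def egf (a : ℕ → ℚ) : ℚ⟦X⟧ :=
  mk fun n => a n / n !

@[simp]
theorem coeff_egf (a : ℕ → ℚ) (n : ℕ) : coeff n (egf a) = a n / n ! :=
  coeff_mk n _

theorem egf_injective : Function.Injective egf := fun a b h => funext fun n => by
  simpa [n.factorial_ne_zero] using congrArg (coeff n) h

theorem egf_sub (a b : ℕ → ℚ) : egf (fun n => a n - b n) = egf a - egf b := by
  ext n
  simp [sub_div]

theorem egf_one : egf 1 = exp ℚ := by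
  ext n
  simp

theorem egf_mul (a b : ℕ → ℚ) :
    egf a * egf b = egf fun n => ∑ j ∈ range (n + 1), n.choose j * a j * b (n - j) := by
  ext n
  rw [coeff_mul, Nat.sum_antidiagonal_eq_sum_range_succ_mk, coeff_egf, sum_div]
  refine sum_congr rfl fun j hj => ?_
  rw [coeff_egf, coeff_egf, Nat.cast_choose ℚ (mem_range_succ_iff.mp hj)]
  field_simp

theorem egf_stirlingTransform_mul_exp {c c' : ℕ → ℚ} (hc : ∀ k, (k + 1) * c k = c' (k + 1)) :
    egf (stirlingTransform c) * exp ℚ =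
      egf (stirlingTransform c) + egf (stirlingTransform c') - C (c' 0) := by
  rw [← egf_one, egf_mul]
  ext n
  simp only [Pi.one_apply, mul_one, sum_range_choose_mul_stirlingTransform_of_add_one_mul hc,
    coeff_egf, map_sub, map_add, coeff_C]
  split_ifs with hn <;> simp [hn, add_div]

theorem pdb_eq_stirlingTransform (r : ℕ) : (pdb · r) = stirlingTransform (pderang · r) := by
  funext n
  rw [pdb, stirling2_eq_stirlingSecond, stirlingTransform]

theorem ordBell_eq_stirlingTransform : ordBell = stirlingTransform fun k => (k ! : ℚ) := by
  funext n
  rw [ordBell, stirling2_eq_stirlingSecond, stirlingTransform]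

theorem pderang_eq_zero_of_lt {n r : ℕ} (h : n < r) : pderang n r = 0 :=
  if_neg (Nat.not_le.mpr h)

theorem pdb_eq_zero_of_lt {n r : ℕ} (h : n < r) : pdb n r = 0 := by
  refine sum_eq_zero fun k hk => ?_
  rw [pderang_eq_zero_of_lt (by rw [mem_range] at hk; omega), mul_zero]

theorem add_one_mul_pderang (k r : ℕ) :
    (k + 1) * pderang k r = (r + 1) * pderang (k + 1) (r + 1) := by
  unfold pderang
  by_cases h : r ≤ k
  · have hchoose : ((k + 1 : ℕ) * k.choose r : ℚ) = (k + 1).choose (r + 1) * (r + 1 : ℕ) := by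
      exact_mod_cast Nat.add_one_mul_choose_eq k r
    rw [if_pos h, if_pos (by omega), Nat.add_sub_add_right]
    push_cast at hchoose
    linear_combination derang (k - r) * hchoose
  · rw [if_neg h, if_neg (by omega), mul_zero, mul_zero]

theorem egf_pdb_mul_exp (r : ℕ) :
    egf (pdb · r) * exp ℚ = egf (pdb · r) + egf fun n => (r + 1) * pdb n (r + 1) := by
  have htransform : stirlingTransform (fun k => (r + 1) * pderang k (r + 1)) =
      fun n => (r + 1) * pdb n (r + 1) := by
    funext n
    rw [congrFun (pdb_eq_stirlingTransform (r + 1)) n, stirlingTransform, stirlingTransform,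
      mul_sum]
    simp only [mul_left_comm]
  rw [pdb_eq_stirlingTransform,
    egf_stirlingTransform_mul_exp (c' := fun k => (r + 1) * pderang k (r + 1))
      (add_one_mul_pderang · r),
    htransform, pderang_eq_zero_of_lt (Nat.succ_pos r), mul_zero, map_zero, sub_zero]

theorem egf_ordBell_mul_exp : egf ordBell * exp ℚ = 2 * egf ordBell - 1 := by
  rw [ordBell_eq_stirlingTransform,
    egf_stirlingTransform_mul_exp (c' := fun k => (k ! : ℚ))
      fun k => by push_cast [factorial_succ]; ring, factorial_zero,
    Nat.cast_one, map_one]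
  ring

theorem egf_pdb_sub_mul_egf_ordBell (r : ℕ) :
    egf (fun n => pdb n r - (r + 1) * pdb n (r + 1)) * egf ordBell = egf (pdb · r) := by
  rw [egf_sub]
  linear_combination egf ordBell * egf_pdb_mul_exp r - egf (pdb · r) * egf_ordBell_mul_exp

theorem sum_range_choose_mul_pdb_sub_mul_ordBell (n r : ℕ) :
    ∑ j ∈ range (n + 1), n.choose j * (pdb j r - (r + 1) * pdb j (r + 1)) * ordBell (n - j) =
      pdb n r := by
  have h := egf_pdb_sub_mul_egf_ordBell r
  rw [egf_mul] at h
  exact congrFun (egf_injective h) n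

/-- For `n ≥ r + 1 > 0`,
`(r+1) w̃_{n,r+1} = ∑_{j=r}^{n-1} C(n,j) w_{n-j} (w̃_{j,r} - (r+1) w̃_{j,r+1})`. -/
theorem succ_mul_pdb_succ_eq_sum (n r : ℕ) (h : r + 1 ≤ n) :
    (r + 1 : ℚ) * pdb n (r + 1) =
      ∑ j ∈ Finset.Icc r (n - 1), (n.choose j : ℚ) * ordBell (n - j) *
        (pdb j r - (r + 1 : ℚ) * pdb j (r + 1)) := by
  have hconv := sum_range_choose_mul_pdb_sub_mul_ordBell n r
  have hordBell_zero : ordBell 0 = 1 := by simp [ordBell, stirling2]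
  rw [sum_range_succ, choose_self, Nat.sub_self, hordBell_zero] at hconv
  have hIcc : Icc r (n - 1) ⊆ range n := fun j hj => by
    simp only [mem_Icc, mem_range] at hj ⊢; omega
  rw [sum_subset hIcc fun j hjn hj => ?_]
  · simp only [mul_right_comm _ (ordBell _)]
    push_cast at hconv
    linarith
  · have hjr : j < r := by simp only [mem_Icc, mem_range, not_and, not_le] at hjn hj; omega
    rw [pdb_eq_zero_of_lt hjr, pdb_eq_zero_of_lt (hjr.trans (lt_add_one r))]
    ring
end

section
/- For all nonnegative integers n, m, r and every integer j ≥ r, d_{j−r,m} · ∑_{k=j−r}^{n} C(n,k)·{n−k brace r}·{k brace j−r} = C(m+r,m)·{n brace j}·d_{j,r+m}. -/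
lemma stirling2_succ_zero (n : ℕ) : stirling2 (n+1) 0 = 0 := rfl
lemma stirling2_succ_succ (n k : ℕ) :
    stirling2 (n+1) (k+1) = (k + 1) * stirling2 n (k + 1) + stirling2 n k := rfl

lemma stirling2_eq_zero_of_lt : ∀ {n k : ℕ}, n < k → stirling2 n k = 0
  | 0, k+1, _ => rfl
  | n+1, k+1, h => by
    rw [stirling2_succ_succ, stirling2_eq_zero_of_lt (by omega),
      stirling2_eq_zero_of_lt (show n < k by omega)]; ring

lemma conv_s0 (n r : ℕ) :
    ∑ k ∈ Finset.range (n+1), n.choose k * (stirling2 k 0 * stirling2 (n-k) r)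
      = stirling2 n r := by
  rw [Finset.sum_eq_single_of_mem 0 (by simp)]
  · simp [stirling2]
  · intro k _ hk
    obtain ⟨k', rfl⟩ := Nat.exists_eq_succ_of_ne_zero hk
    simp [stirling2_succ_zero]

lemma conv_r0 (n s : ℕ) :
    ∑ k ∈ Finset.range (n+1), n.choose k * (stirling2 k s * stirling2 (n-k) 0)
      = stirling2 n s := by
  rw [Finset.sum_eq_single_of_mem n (by simp)]
  · simp [stirling2]
  · intro k hk hkn
    have : n - k ≠ 0 := by
      have := Finset.mem_range.mp hk; omega
    obtain ⟨t, ht⟩ := Nat.exists_eq_succ_of_ne_zero this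
    rw [ht, stirling2_succ_zero]; ring

lemma conv (n : ℕ) : ∀ r s : ℕ,
    ∑ k ∈ Finset.range (n+1), n.choose k * (stirling2 k s * stirling2 (n-k) r)
      = (r+s).choose s * stirling2 n (r+s) := by
  induction n with
  | zero =>
    intro r s
    cases r <;> cases s <;> simp [stirling2]
  | succ n ih =>
    intro r s
    match r, s with
    | r, 0 => simpa using conv_s0 (n+1) r
    | 0, s+1 => simpa using conv_r0 (n+1) (s+1)
    | r+1, s+1 =>
      have key := Finset.sum_choose_succ_mul
        (fun i j => stirling2 i (s+1) * stirling2 j (r+1)) n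
      simp only [Nat.cast_id] at key
      rw [show n+1+1 = n+2 from rfl, key]
      have e1 : ∑ i ∈ Finset.range (n+1),
            (n.choose i) * (stirling2 i (s+1) * stirling2 (n+1-i) (r+1))
          = (r+1) * ∑ i ∈ Finset.range (n+1),
              n.choose i * (stirling2 i (s+1) * stirling2 (n-i) (r+1))
            + ∑ i ∈ Finset.range (n+1),
              n.choose i * (stirling2 i (s+1) * stirling2 (n-i) r) := by
        rw [Finset.mul_sum, ← Finset.sum_add_distrib]
        refine Finset.sum_congr rfl fun i hi => ?_
        have hin : i ≤ n := Nat.lt_succ_iff.mp (Finset.mem_range.mp hi)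
        rw [show n+1-i = (n-i)+1 by omega, stirling2_succ_succ]
        ring
      have e2 : ∑ i ∈ Finset.range (n+1),
            (n.choose i) * (stirling2 (i+1) (s+1) * stirling2 (n-i) (r+1))
          = (s+1) * ∑ i ∈ Finset.range (n+1),
              n.choose i * (stirling2 i (s+1) * stirling2 (n-i) (r+1))
            + ∑ i ∈ Finset.range (n+1),
              n.choose i * (stirling2 i s * stirling2 (n-i) (r+1)) := by
        rw [Finset.mul_sum, ← Finset.sum_add_distrib]
        refine Finset.sum_congr rfl fun i hi => ?_
        rw [stirling2_succ_succ]
        ring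
      rw [e1, e2, ih (r+1) (s+1), ih r (s+1), ih (r+1) s]
      rw [show r+(s+1) = r+s+1 by ring, show r+1+s = r+s+1 by ring,
        show r+1+(s+1) = (r+s+1)+1 by ring, stirling2_succ_succ,
        Nat.choose_succ_succ (r+s+1) s]
      ring

lemma key_scalar (r s m : ℕ) :
    pderang s m * ((r+s).choose s : ℚ) = ((m+r).choose m : ℚ) * pderang (r+s) (r+m) := by
  by_cases hm : m ≤ s
  · rw [pderang, pderang, if_pos hm, if_pos (show r+m ≤ r+s by omega),
      show r + s - (r+m) = s - m by omega]
    have h1 : ((r+s).choose s : ℚ)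
        = ((r+s).factorial : ℚ) / ((s.factorial : ℚ) * (r.factorial : ℚ)) := by
      rw [Nat.cast_choose ℚ (by omega : s ≤ r + s), show r + s - s = r by omega]
    have h2 : ((r+s).choose (r+m) : ℚ)
        = ((r+s).factorial : ℚ) / (((r+m).factorial : ℚ) * ((s-m).factorial : ℚ)) := by
      rw [Nat.cast_choose ℚ (by omega : r + m ≤ r + s), show r + s - (r+m) = s - m by omega]
    have h3 : ((m+r).choose m : ℚ)
        = ((m+r).factorial : ℚ) / ((m.factorial : ℚ) * (r.factorial : ℚ)) := by
      rw [Nat.cast_choose ℚ (by omega : m ≤ m + r), show m + r - m = r by omega]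
    have h4 : (s.choose m : ℚ)
        = (s.factorial : ℚ) / ((m.factorial : ℚ) * ((s-m).factorial : ℚ)) := by
      rw [Nat.cast_choose ℚ hm]
    rw [h1, h2, h3, h4, show ((r+m).factorial : ℚ) = ((m+r).factorial : ℚ) by rw [Nat.add_comm]]
    have f1 : ((r+s).factorial : ℚ) ≠ 0 := by positivity
    have f2 : (s.factorial : ℚ) ≠ 0 := by positivity
    have f3 : (r.factorial : ℚ) ≠ 0 := by positivity
    have f4 : (m.factorial : ℚ) ≠ 0 := by positivity
    have f5 : ((s-m).factorial : ℚ) ≠ 0 := by positivity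
    have f6 : ((m+r).factorial : ℚ) ≠ 0 := by positivity
    field_simp
  · rw [pderang, pderang, if_neg (by omega), if_neg (by omega)]
    ring

/-- For `j ≥ r`,
`d_{j-r,m} ∑_{k=j-r}^n C(n,k) {n-k brace r} {k brace j-r} = C(m+r,m) {n brace j} d_{j,r+m}`. -/
theorem pderang_mul_sum_choose_stirling (n m r j : ℕ) (hj : r ≤ j) :
    pderang (j - r) m * ∑ k ∈ Finset.Icc (j - r) n,
        (n.choose k : ℚ) * (stirling2 (n - k) r : ℚ) * (stirling2 k (j - r) : ℚ) =
      ((m + r).choose m : ℚ) * (stirling2 n j : ℚ) * pderang j (r + m) := by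
  set s := j - r with hs
  have hjs : j = r + s := by omega
  have h1 : ∑ k ∈ Finset.Icc s n, (n.choose k : ℚ) * (stirling2 (n-k) r : ℚ) * (stirling2 k s : ℚ)
      = ∑ k ∈ Finset.range (n+1),
          (n.choose k : ℚ) * (stirling2 (n-k) r : ℚ) * (stirling2 k s : ℚ) := by
    apply Finset.sum_subset
    · intro x hx
      simp only [Finset.mem_Icc] at hx
      simp only [Finset.mem_range]; omega
    · intro x hx hx2
      simp only [Finset.mem_range] at hx
      simp only [Finset.mem_Icc] at hx2
      rw [stirling2_eq_zero_of_lt (show x < s by omega)]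
      simp
  have h2 : ∑ k ∈ Finset.range (n+1),
        (n.choose k : ℚ) * (stirling2 (n-k) r : ℚ) * (stirling2 k s : ℚ)
      = ((∑ k ∈ Finset.range (n+1),
          n.choose k * (stirling2 k s * stirling2 (n-k) r) : ℕ) : ℚ) := by
    push_cast
    exact Finset.sum_congr rfl fun k _ => by ring
  rw [h1, h2, conv n r s, hjs]
  have h := key_scalar r s m
  push_cast
  linear_combination (stirling2 n (r+s) : ℚ) * h
end
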